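/- arXiv:1307.5279 — 4 statements merged into one kernel-verified Lean document; each statement's English description precedes it below -/
import Mathlib

section
/- Every colored graph is 2-connected: removing any single vertex leaves the graph connected. -/
/-- A `(D+1)`-colored graph: a finite vertex set with a black/white 2-coloring
and, for each color `c ∈ {0,…,D}`, a perfect matching `σ c` (a fixed-point-free
involution matching black vertices to white ones), the whole graph being connected.
Each vertex is incident to exactly one edge of each color. -/
structure ColoredGraph (D : ℕ) where
  V : Type
  [fintypeV : Fintype V]
  isBlack : V → Bool
  σ : Fin (D + 1) → V → V
  invol : ∀ c v, σ c (σ c v) = v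
  bipartite : ∀ c v, isBlack (σ c v) = !isBlack v
  conn : ∀ u v : V, Relation.ReflTransGen (fun a b => ∃ c, σ c a = b) u v

attribute [instance] ColoredGraph.fintypeV

/-!
A walk from `u` to `v` meets `x` only in passages `σ c x — x — σ c' x`, so it suffices to rejoin
any two neighbours `σ c x` and `σ c' x` without passing through `x`. The bicolored cycle through
`x` alternating the colors `c'` and `c` does this: iterating `σ c ∘ σ c'` from `σ c x` reaches
`σ c' x` (the map is a permutation of a finite set sending `σ c' x` to `σ c x`), and stopping at
the first arrival, the path avoids `x`, because each iterate has the color opposite to `x`.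
-/

open Function Relation

theorem Function.Injective.exists_iterate_eq_of_apply_eq {α : Type*} [Finite α] {g : α → α}
    (hg : Injective g) {a b : α} (h : g b = a) : ∃ n, g^[n] a = b := by
  obtain ⟨m, hm, hb⟩ := hg.mem_periodicPts b
  refine ⟨m - 1, ?_⟩
  rw [← h, ← iterate_succ_apply, Nat.succ_eq_add_one, Nat.sub_add_cancel hm]
  exact hb

theorem Relation.ReflTransGen.avoiding {α : Type*} {r : α → α → Prop} {x u v : α}
    (h : ReflTransGen r u v) (hu : u ≠ x) (hv : v ≠ x)
    (hx : ∀ p q, p ≠ x → q ≠ x → r p x → r x q →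
      ReflTransGen (fun a b => a ≠ x ∧ b ≠ x ∧ r a b) p q) :
    ReflTransGen (fun a b => a ≠ x ∧ b ≠ x ∧ r a b) u v := by
  suffices ∀ z, ReflTransGen r u z → (z ≠ x → ReflTransGen (fun a b => a ≠ x ∧ b ≠ x ∧ r a b) u z)
      ∧ (z = x → ∃ p ≠ x, r p x ∧ ReflTransGen (fun a b => a ≠ x ∧ b ≠ x ∧ r a b) u p) from
    (this v h).1 hv
  intro z hz
  induction hz with
  | refl => exact ⟨fun _ => .refl, fun h => absurd h hu⟩
  | @tail p q _ hpq ih =>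
    by_cases hp : p = x <;> by_cases hq : q = x
    · exact ⟨absurd hq, fun _ => ih.2 hp⟩
    · obtain ⟨w, hw, hwx, huw⟩ := ih.2 hp
      exact ⟨fun _ => huw.trans (hx w q hw hq hwx (hp ▸ hpq)), (absurd · hq)⟩
    · exact ⟨absurd hq, fun _ => ⟨p, hp, hq ▸ hpq, ih.1 hp⟩⟩
    · exact ⟨fun _ => (ih.1 hp).tail ⟨hp, hq, hpq⟩, (absurd · hq)⟩

section Alternating

variable {α : Type*} {s t : α → α} {f : α → Bool}

theorem apply_iterate_comp_eq_of_flip (hs : ∀ y, f (s y) = !f y) (ht : ∀ y, f (t y) = !f y)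
    (n : ℕ) (y : α) : f ((s ∘ t)^[n] y) = f y := by
  induction n with
  | zero => rfl
  | succ n ih => rw [iterate_succ_apply', comp_apply, hs, ht, ih, Bool.not_not]

theorem reflTransGen_apply_apply_avoiding [Finite α] (hs : Involutive s) (ht : Involutive t)
    (hfs : ∀ y, f (s y) = !f y) (hft : ∀ y, f (t y) = !f y) (x : α) :
    ReflTransGen (fun a b => a ≠ x ∧ b ≠ x ∧ (s a = b ∨ t a = b)) (s x) (t x) := by
  classical
  have hex : ∃ n, (s ∘ t)^[n] (s x) = t x :=
    (hs.injective.comp ht.injective).exists_iterate_eq_of_apply_eq (by simp [ht x])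
  have hne : ∀ j, (s ∘ t)^[j] (s x) ≠ x := fun j h => by
    simpa [h, hfs] using apply_iterate_comp_eq_of_flip hfs hft j (s x)
  have hpath : ∀ j ≤ Nat.find hex,
      ReflTransGen (fun a b => a ≠ x ∧ b ≠ x ∧ (s a = b ∨ t a = b)) (s x) ((s ∘ t)^[j] (s x)) := by
    intro j hj
    induction j with
    | zero => exact .refl
    | succ j ih =>
      have hj' : t ((s ∘ t)^[j] (s x)) ≠ x := fun h => Nat.find_min hex hj (ht.eq_iff.mp h)
      refine ((ih (by omega)).tail ⟨hne j, hj', .inr rfl⟩).tail ⟨hj', hne (j + 1), .inl ?_⟩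
      rw [iterate_succ_apply', comp_apply]
  simpa [Nat.find_spec hex] using hpath _ le_rfl

end Alternating

namespace ColoredGraph

theorem reflTransGen_σ_σ_avoiding {D : ℕ} (G : ColoredGraph D) (x : G.V) (c c' : Fin (D + 1)) :
    ReflTransGen (fun a b => a ≠ x ∧ b ≠ x ∧ ∃ c, G.σ c a = b) (G.σ c x) (G.σ c' x) :=
  ReflTransGen.mono (fun _ _ ⟨ha, hb, h⟩ => ⟨ha, hb, h.elim (⟨c, ·⟩) (⟨c', ·⟩)⟩) _ _
    (reflTransGen_apply_apply_avoiding (G.invol c) (G.invol c') (G.bipartite c) (G.bipartite c') x)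

end ColoredGraph

theorem colored_graph_two_connected_general (D : ℕ) (G : ColoredGraph D)
    (x u v : G.V) (hu : u ≠ x) (hv : v ≠ x) :
    Relation.ReflTransGen (fun a b => a ≠ x ∧ b ≠ x ∧ ∃ c, G.σ c a = b) u v := by
  refine (G.conn u v).avoiding hu hv fun p q _ _ ⟨c, hpx⟩ ⟨c', hxq⟩ => ?_
  obtain rfl : p = G.σ c x := by rw [← hpx, G.invol]
  exact hxq ▸ G.reflTransGen_σ_σ_avoiding x c c'

/-- Colored graphs are 2-connected: removing any single vertex `x` leaves the graph
connected, i.e. any two vertices `u, v ≠ x` are joined by a walk avoiding `x`. -/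
theorem colored_graph_two_connected (D : ℕ) (hD : 3 ≤ D) (G : ColoredGraph D)
    (x u v : G.V) (hu : u ≠ x) (hv : v ≠ x) :
    Relation.ReflTransGen (fun a b => a ≠ x ∧ b ≠ x ∧ ∃ c, G.σ c a = b) u v :=
  colored_graph_two_connected_general D G x u v hu hv
end

section
/- Let G be a finite 2-connected graph and e, e', e'' be edges such that {e,e'} and {e,e''} are both 2-edge-cuts. Then {e',e''} is also a 2-edge-cut of G. -/
/-- A finite graph is 2-connected if it is connected and removing any single vertex
leaves it connected. -/
def TwoConnected {V : Type*} (G : SimpleGraph V) : Prop :=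
  G.Connected ∧ ∀ v : V, (G.induce {v}ᶜ).Connected

/-- A pair of (distinct) edges `{e, e'}` of a graph is a 2-edge-cut if deleting both
edges disconnects the graph. -/
def IsTwoEdgeCut {V : Type*} (G : SimpleGraph V) (e e' : Sym2 V) : Prop :=
  e ∈ G.edgeSet ∧ e' ∈ G.edgeSet ∧ e ≠ e' ∧ ¬ (G.deleteEdges {e, e'}).Connected

/-!
Write `e = s(x, y)`. A 2-connected graph has no bridges, so `G - e`, `G - e'` and `G - e''` are
connected; hence `G - e - e'` has exactly two components, joined by both `e` and `e'`, and
likewise for `G - e - e''`. Let `S'` and `S''` be the components of `x` in these two graphs. An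
edge leaves `S' ∆ S''` iff it leaves exactly one of `S'`, `S''`: the edge `e` leaves both, `e'`
leaves only `S'`, `e''` only `S''`, and no other edge leaves either. So `S' ∆ S''` is a proper
nonempty vertex set left only by `e'` and `e''`.
-/

namespace SimpleGraph

variable {V : Type*} {G : SimpleGraph V}

lemma Reachable.iff_of_forall_adj {S : V → Prop} (hS : ∀ a b, G.Adj a b → (S a ↔ S b))
    {a b : V} (h : G.Reachable a b) : S a ↔ S b := by
  obtain ⟨w⟩ := h
  induction w with
  | nil => rfl
  | cons hadj _ ih => exact (hS _ _ hadj).trans ih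

lemma Adj.reachable_iff_reachable {a b : V} (h : G.Adj a b) (x : V) :
    G.Reachable a x ↔ G.Reachable b x :=
  ⟨h.symm.reachable.trans, h.reachable.trans⟩

lemma reachable_deleteEdges_of_mem {f : Sym2 V} {z a b : V} (hzf : z ∈ f) (ha : a ≠ z)
    (hb : b ≠ z) (hz : (G.induce {z}ᶜ).Preconnected) : (G.deleteEdges {f}).Reachable a b := by
  let φ : G.induce {z}ᶜ →g G.deleteEdges {f} :=
    ⟨Subtype.val, fun {c d} hcd => (G.deleteEdges_adj ..).2 ⟨hcd, fun hf => ?_⟩⟩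
  · exact (hz ⟨a, ha⟩ ⟨b, hb⟩).map φ
  · rw [Set.mem_singleton_iff] at hf
    rcases Sym2.mem_iff.1 (hf ▸ hzf) with h | h
    exacts [c.2 h.symm, d.2 h.symm]

lemma deleteEdges_pair_adj {f g : Sym2 V} {a b : V} :
    (G.deleteEdges {f, g}).Adj a b ↔ G.Adj a b ∧ s(a, b) ≠ f ∧ s(a, b) ≠ g := by
  simp

lemma connected_deleteEdges_of_forall_preconnected_induce_compl
    (hG : ∀ v, (G.induce {v}ᶜ).Preconnected) {f g : Sym2 V} (hf : f ∈ G.edgeSet)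
    (hg : g ∈ G.edgeSet) (hgf : g ≠ f) : (G.deleteEdges {f}).Connected := by
  induction f using Sym2.ind with | _ u v => ?_
  obtain ⟨w, hw⟩ : ∃ w, w ∉ s(u, v) := by
    induction g using Sym2.ind with | _ p q => ?_
    by_contra! h
    exact hgf ((Sym2.mem_and_mem_iff (G.mem_edgeSet.1 hg).ne).1 ⟨h p, h q⟩).symm
  obtain ⟨hwu, hwv⟩ : w ≠ u ∧ w ≠ v := by simpa [not_or] using hw
  have : Nonempty V := ⟨w⟩
  refine (connected_iff_exists_forall_reachable _).2 ⟨w, fun b => ?_⟩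
  by_cases hbu : b = u
  · subst hbu
    exact reachable_deleteEdges_of_mem (Sym2.mem_mk_right b v) hwv (G.mem_edgeSet.1 hf).ne (hG v)
  · exact reachable_deleteEdges_of_mem (Sym2.mem_mk_left u v) hwu hbu (hG u)

lemma not_reachable_iff_of_not_connected_deleteEdges {f : Sym2 V} {p q x : V}
    (hf : (G.deleteEdges {f}).Connected) (hcut : ¬(G.deleteEdges {f, s(p, q)}).Connected) :
    ¬((G.deleteEdges {f, s(p, q)}).Reachable p x ↔ (G.deleteEdges {f, s(p, q)}).Reachable q x) := by
  set D := G.deleteEdges {f, s(p, q)}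
  intro hpq
  have hclosed : ∀ a b, (G.deleteEdges {f}).Adj a b → (D.Reachable a x ↔ D.Reachable b x) := by
    intro a b hab
    by_cases h : s(a, b) = s(p, q)
    · rcases Sym2.eq_iff.1 h with ⟨rfl, rfl⟩ | ⟨rfl, rfl⟩
      exacts [hpq, hpq.symm]
    · obtain ⟨hab, habf⟩ := (G.deleteEdges_adj ..).1 hab
      exact (deleteEdges_pair_adj.2 ⟨hab, habf, h⟩ : D.Adj a b).reachable_iff_reachable x
  have hx : ∀ a, D.Reachable a x := fun a =>
    ((hf.preconnected a x).iff_of_forall_adj hclosed).2 (Reachable.refl x)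
  have := hf.nonempty
  exact hcut ⟨fun a b => (hx a).trans (hx b).symm⟩

end SimpleGraph

open SimpleGraph

theorem two_edge_cut_trans_general {V : Type*} (G : SimpleGraph V)
    (h2 : TwoConnected G) (e e' e'' : Sym2 V) (hne : e' ≠ e'')
    (h1 : IsTwoEdgeCut G e e') (h2cut : IsTwoEdgeCut G e e'') :
    IsTwoEdgeCut G e' e'' := by
  obtain ⟨he, he', hee', hcut'⟩ := h1
  obtain ⟨-, he'', hee'', hcut''⟩ := h2cut
  have hvert := fun v => (h2.2 v).preconnected
  have hGe := connected_deleteEdges_of_forall_preconnected_induce_compl hvert he he' hee'.symm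
  have hGe' := connected_deleteEdges_of_forall_preconnected_induce_compl hvert he' he hee'
  have hGe'' := connected_deleteEdges_of_forall_preconnected_induce_compl hvert he'' he hee''
  refine ⟨he', he'', hne, fun hconn => ?_⟩
  induction e using Sym2.ind with | _ x y => ?_
  induction e' using Sym2.ind with | _ p q => ?_
  have hxy' := not_reachable_iff_of_not_connected_deleteEdges (x := x) hGe'
    (by rwa [Set.pair_comm] at hcut')
  have hxy'' := not_reachable_iff_of_not_connected_deleteEdges (x := x) hGe''
    (by rwa [Set.pair_comm] at hcut'')
  have hpq' := not_reachable_iff_of_not_connected_deleteEdges (x := x) hGe hcut'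
  have hpq'' := (deleteEdges_pair_adj (f := e'') (g := s(x, y)) |>.2
    ⟨he', hne, hee'.symm⟩).reachable_iff_reachable x
  rw [Set.pair_comm] at hxy'
  set D' := G.deleteEdges {s(x, y), s(p, q)}
  set D'' := G.deleteEdges {e'', s(x, y)}
  have hclosed : ∀ a b, (G.deleteEdges {s(p, q), e''}).Adj a b →
      ((D'.Reachable a x ↔ D''.Reachable a x) ↔ (D'.Reachable b x ↔ D''.Reachable b x)) := by
    intro a b hab
    obtain ⟨hab, habpq, habe''⟩ := deleteEdges_pair_adj.1 hab
    by_cases habxy : s(a, b) = s(x, y)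
    · rcases Sym2.eq_iff.1 habxy with ⟨rfl, rfl⟩ | ⟨rfl, rfl⟩ <;> grind
    · rw [(deleteEdges_pair_adj.2 ⟨hab, habxy, habpq⟩ : D'.Adj a b).reachable_iff_reachable,
        (deleteEdges_pair_adj.2 ⟨hab, habe'', habxy⟩ : D''.Adj a b).reachable_iff_reachable]
  have := (hconn.preconnected p q).iff_of_forall_adj hclosed
  grind

/-- In a finite 2-connected graph, if `{e, e'}` and `{e, e''}` are 2-edge-cuts, then
`{e', e''}` is also a 2-edge-cut. -/
theorem two_edge_cut_trans {V : Type*} [Fintype V] (G : SimpleGraph V)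
    (h2 : TwoConnected G) (e e' e'' : Sym2 V) (hne : e' ≠ e'')
    (h1 : IsTwoEdgeCut G e e') (h2cut : IsTwoEdgeCut G e e'') :
    IsTwoEdgeCut G e' e'' :=
  two_edge_cut_trans_general G h2 e e' e'' hne h1 h2cut
end

section
/- The radius of convergence of the power series Σ_k (1/((D+1)k+1))·binomial((D+1)k+1, k)·z^k equals D^D/(D+1)^{D+1}. -/
/-!
The coefficients are `c_k = ((D+1)k)! / (k! (Dk+1)!)`, so `c_{k+1} / c_k` is the quotient of the
rising factorial `((D+1)k+1)⋯((D+1)k+D+1)` by `(k+1) (Dk+2)⋯(Dk+D+1)`: two polynomials of degree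
`D + 1` in `k` with leading coefficients `(D+1)^(D+1)` and `D^D`. The ratio test then
gives convergence for `|x| < D^D / (D+1)^(D+1)` and divergence beyond.
-/

open Filter Finset Topology Nat

section RatioTest

variable {α : Type*} [NormedDivisionRing α] {f : ℕ → α} {l : ℝ} {z : α}

theorem tendsto_norm_mul_pow_ratio (hz : z ≠ 0)
    (h : Tendsto (fun n ↦ ‖f (n + 1)‖ / ‖f n‖) atTop (𝓝 l)) :
    Tendsto (fun n ↦ ‖f (n + 1) * z ^ (n + 1)‖ / ‖f n * z ^ n‖) atTop (𝓝 (l * ‖z‖)) := by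
  refine (h.mul_const ‖z‖).congr fun n ↦ ?_
  have hzn : ‖z‖ ^ n ≠ 0 := pow_ne_zero n (norm_ne_zero_iff.mpr hz)
  rw [norm_mul, norm_mul, norm_pow, norm_pow, mul_div_mul_comm, pow_succ,
    mul_div_cancel_left₀ _ hzn]

theorem summable_mul_pow_of_ratio_tendsto [CompleteSpace α] (hf : ∀ᶠ n in atTop, f n ≠ 0)
    (h : Tendsto (fun n ↦ ‖f (n + 1)‖ / ‖f n‖) atTop (𝓝 l)) (hz : l * ‖z‖ < 1) :
    Summable fun n ↦ f n * z ^ n := by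
  rcases eq_or_ne z 0 with rfl | hz₀
  · exact (summable_nat_add_iff 1).mp (by simp)
  refine summable_of_ratio_test_tendsto_lt_one hz ?_ (tendsto_norm_mul_pow_ratio hz₀ h)
  filter_upwards [hf] with n hn using mul_ne_zero hn (pow_ne_zero n hz₀)

theorem not_summable_mul_pow_of_ratio_tendsto
    (h : Tendsto (fun n ↦ ‖f (n + 1)‖ / ‖f n‖) atTop (𝓝 l)) (hz : 1 < l * ‖z‖) :
    ¬Summable fun n ↦ f n * z ^ n := by
  have hz₀ : z ≠ 0 := by rintro rfl; simp at hz; linarith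
  exact not_summable_of_ratio_test_tendsto_gt_one hz (tendsto_norm_mul_pow_ratio hz₀ h)

end RatioTest

theorem tendsto_ascFactorial_div_pow (a b m : ℕ) :
    Tendsto (fun k : ℕ ↦ ((a * k + b).ascFactorial m : ℝ) / (k : ℝ) ^ m) atTop
      (𝓝 ((a : ℝ) ^ m)) := by
  have hfactor (i : ℕ) : Tendsto (fun k : ℕ ↦ ((a * k + b + i : ℕ) : ℝ) / k) atTop (𝓝 a) := by
    have h := tendsto_add_mul_div_add_mul_atTop_nhds ((b + i : ℕ) : ℝ) 0 (a : ℝ) one_ne_zero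
    rw [div_one] at h
    refine h.congr fun k ↦ ?_
    push_cast
    ring_nf
  have hprod := tendsto_finsetProd (range m) fun i _ ↦ hfactor i
  rw [prod_const, card_range] at hprod
  refine hprod.congr fun k ↦ ?_
  rw [prod_div_distrib, prod_const, card_range, Nat.ascFactorial_eq_prod_range, Nat.cast_prod]

noncomputable def fussCatalan (D k : ℕ) : ℝ :=
  (1 / (((D + 1) * k + 1 : ℕ) : ℝ)) * ((((D + 1) * k + 1).choose k : ℕ) : ℝ)

theorem fussCatalan_eq_factorial (D k : ℕ) :
    fussCatalan D k = ((D + 1) * k)! / (k ! * (D * k + 1)! : ℝ) := by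
  have hsub : (D + 1) * k + 1 - k = D * k + 1 := by rw [add_mul, one_mul]; omega
  have h := Nat.choose_mul_factorial_mul_factorial (n := (D + 1) * k + 1) (k := k)
    (by rw [add_mul]; omega)
  rw [hsub, Nat.factorial_succ] at h
  rw [fussCatalan]
  field_simp
  exact_mod_cast h

theorem fussCatalan_pos (D k : ℕ) : 0 < fussCatalan D k := by
  rw [fussCatalan_eq_factorial]
  positivity

theorem fussCatalan_succ_div (D k : ℕ) :
    fussCatalan D (k + 1) / fussCatalan D k =
      ((D + 1) * k + 1).ascFactorial (D + 1) / ((k + 1) * (D * k + 2).ascFactorial D : ℝ) := by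
  have hnum := Nat.factorial_mul_ascFactorial ((D + 1) * k) (D + 1)
  have hden := Nat.factorial_mul_ascFactorial (D * k + 1) D
  rw [fussCatalan_eq_factorial, fussCatalan_eq_factorial,
    show (D + 1) * (k + 1) = (D + 1) * k + (D + 1) by ring,
    show D * (k + 1) + 1 = D * k + 1 + D by ring, ← hnum, ← hden, Nat.factorial_succ k]
  push_cast
  field_simp

theorem tendsto_fussCatalan_succ_div (D : ℕ) :
    Tendsto (fun k ↦ fussCatalan D (k + 1) / fussCatalan D k) atTop
      (𝓝 (((D : ℝ) + 1) ^ (D + 1) / (D : ℝ) ^ D)) := by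
  have hnum := tendsto_ascFactorial_div_pow (D + 1) 1 (D + 1)
  have hden := tendsto_ascFactorial_div_pow D 2 D
  have hlin := tendsto_add_mul_div_add_mul_atTop_nhds (1 : ℝ) 0 1 one_ne_zero
  have hDD : (D : ℝ) ^ D ≠ 0 := by exact_mod_cast Nat.pow_self_pos.ne'
  have h := hnum.div (hlin.mul hden) (by simp [hDD])
  simp only [div_one, one_mul, zero_add, Nat.cast_add, Nat.cast_one] at h
  refine h.congr' ?_
  filter_upwards [eventually_ne_atTop 0] with k hk
  rw [Pi.div_apply, fussCatalan_succ_div]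
  field_simp
  ring

theorem melonic_gf_radius_general (D : ℕ) :
    (∀ x : ℝ, |x| < (D : ℝ) ^ D / ((D : ℝ) + 1) ^ (D + 1) →
      Summable (fun k : ℕ =>
        (1 / (((D + 1) * k + 1 : ℕ) : ℝ)) * ((((D + 1) * k + 1).choose k : ℕ) : ℝ) * x ^ k)) ∧
    (∀ x : ℝ, (D : ℝ) ^ D / ((D : ℝ) + 1) ^ (D + 1) < |x| →
      ¬ Summable (fun k : ℕ =>
        (1 / (((D + 1) * k + 1 : ℕ) : ℝ)) * ((((D + 1) * k + 1).choose k : ℕ) : ℝ) * x ^ k)) := by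
  have hratio : Tendsto (fun k ↦ ‖fussCatalan D (k + 1)‖ / ‖fussCatalan D k‖) atTop
      (𝓝 (((D : ℝ) + 1) ^ (D + 1) / (D : ℝ) ^ D)) := by
    simpa only [Real.norm_of_nonneg (fussCatalan_pos D _).le] using tendsto_fussCatalan_succ_div D
  have hl : 0 < ((D : ℝ) + 1) ^ (D + 1) / (D : ℝ) ^ D := by
    have : (0 : ℝ) < (D : ℝ) ^ D := by exact_mod_cast Nat.pow_self_pos
    positivity
  refine ⟨fun x hx ↦ ?_, fun x hx ↦ ?_⟩
  · refine summable_mul_pow_of_ratio_tendsto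
      (.of_forall fun k ↦ (fussCatalan_pos D k).ne') hratio ?_
    rwa [Real.norm_eq_abs, ← lt_div_iff₀' hl, one_div_div]
  · refine not_summable_mul_pow_of_ratio_tendsto hratio ?_
    rwa [Real.norm_eq_abs, ← div_lt_iff₀' hl, one_div_div]

/-- The radius of convergence of the Fuss–Catalan series
`Σ_k (1/((D+1)k+1))·C((D+1)k+1, k)·z^k` equals `z₀ = D^D/(D+1)^(D+1)`:
the series converges (absolutely) for `|x| < z₀` and diverges for `|x| > z₀`. -/
theorem melonic_gf_radius (D : ℕ) (hD : 1 ≤ D) :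
    (∀ x : ℝ, |x| < (D : ℝ) ^ D / ((D : ℝ) + 1) ^ (D + 1) →
      Summable (fun k : ℕ =>
        (1 / (((D + 1) * k + 1 : ℕ) : ℝ)) * ((((D + 1) * k + 1).choose k : ℕ) : ℝ) * x ^ k)) ∧
    (∀ x : ℝ, (D : ℝ) ^ D / ((D : ℝ) + 1) ^ (D + 1) < |x| →
      ¬ Summable (fun k : ℕ =>
        (1 / (((D + 1) * k + 1 : ℕ) : ℝ)) * ((((D + 1) * k + 1).choose k : ℕ) : ℝ) * x ^ k)) :=
  melonic_gf_radius_general D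
end

section
/- The maximum of 2x + 3y − 1 over nonnegative integers x, y satisfying (D−2)x + Dy = δ is: 2δ/(D−2) − 1 when 3 ≤ D ≤ 5 and (D−2) divides δ (attained at x = δ/(D−2), y = 0); and 3δ/D − 1 when D ≥ 7 and D divides δ (attained at x = 0, y = δ/D). -/
/-! Weak LP duality: with `c = D - 2`, `k = 2` when `D ≤ 6` and `c = D`, `k = 3` when `D ≥ 6`,
the objective coefficients `(2, 3)` scaled by `c` are dominated coefficientwise by the constraint
coefficients `(D - 2, D)` scaled by `k`, so `c (2x + 3y) ≤ k δ` on the feasible set, and the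
vertex `y = 0`, resp. `x = 0`, attains this bound. -/

theorem mul_linear_le_mul_linear {R : Type*} [CommSemiring R] [PartialOrder R] [IsOrderedRing R]
    {a b p q c k x y : R} (hx : 0 ≤ x) (hy : 0 ≤ y) (ha : c * p ≤ k * a) (hb : c * q ≤ k * b) :
    c * (p * x + q * y) ≤ k * (a * x + b * y) :=
  calc c * (p * x + q * y) = c * p * x + c * q * y := by ring
    _ ≤ k * a * x + k * b * y := by gcongr
    _ = k * (a * x + b * y) := by ring

def objectiveValues (D δ : ℤ) : Set ℤ :=
  {v | ∃ x y : ℕ, (D - 2) * x + D * y = δ ∧ v = 2 * x + 3 * y - 1}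

theorem isGreatest_objectiveValues_of_le_six {D : ℤ} (m : ℕ) (h3 : 3 ≤ D) (h6 : D ≤ 6) :
    IsGreatest (objectiveValues D ((D - 2) * m)) (2 * m - 1) := by
  refine ⟨⟨m, 0, by push_cast; ring, by push_cast; ring⟩, ?_⟩
  rintro v ⟨x, y, hxy, rfl⟩
  have hdual : (D - 2) * (2 * x + 3 * y) ≤ 2 * ((D - 2) * x + D * y) :=
    mul_linear_le_mul_linear (by positivity) (by positivity) (by linarith) (by linarith)
  rw [hxy] at hdual
  have : (2 * x + 3 * y : ℤ) ≤ 2 * m :=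
    le_of_mul_le_mul_left (by linarith) (by linarith : (0 : ℤ) < D - 2)
  linarith

theorem isGreatest_objectiveValues_of_six_le {D : ℤ} (m : ℕ) (h6 : 6 ≤ D) :
    IsGreatest (objectiveValues D (D * m)) (3 * m - 1) := by
  refine ⟨⟨0, m, by push_cast; ring, by push_cast; ring⟩, ?_⟩
  rintro v ⟨x, y, hxy, rfl⟩
  have hdual : D * (2 * x + 3 * y) ≤ 3 * ((D - 2) * x + D * y) :=
    mul_linear_le_mul_linear (by positivity) (by positivity) (by linarith) (by linarith)
  rw [hxy] at hdual
  have : (2 * x + 3 * y : ℤ) ≤ 3 * m :=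
    le_of_mul_le_mul_left (by linarith) (by linarith : (0 : ℤ) < D)
  linarith

theorem scheme_lp_max_general (D δ m : ℕ) :
    ((3 ≤ D ∧ D ≤ 5) → (δ : ℤ) = ((D : ℤ) - 2) * m →
      IsGreatest
        {v : ℤ | ∃ x y : ℕ, ((D : ℤ) - 2) * x + (D : ℤ) * y = (δ : ℤ) ∧
          v = 2 * x + 3 * y - 1}
        (2 * (m : ℤ) - 1)) ∧
    (7 ≤ D → (δ : ℤ) = (D : ℤ) * m →
      IsGreatest
        {v : ℤ | ∃ x y : ℕ, ((D : ℤ) - 2) * x + (D : ℤ) * y = (δ : ℤ) ∧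
          v = 2 * x + 3 * y - 1}
        (3 * (m : ℤ) - 1)) := by
  refine ⟨fun ⟨h3, h5⟩ hm => ?_, fun h7 hm => ?_⟩
  · rw [hm]
    exact isGreatest_objectiveValues_of_le_six m (by omega) (by omega)
  · rw [hm]
    exact isGreatest_objectiveValues_of_six_le m (by omega)

/-- The maximum of `2x + 3y − 1` over nonnegative integers `x, y` with
`(D−2)x + Dy = δ`: for `3 ≤ D ≤ 5` and `δ = (D−2)·m` the maximum is `2m − 1`
(attained at `x = m, y = 0`), and for `D ≥ 7` and `δ = D·m` the maximum is
`3m − 1` (attained at `x = 0, y = m`). -/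
theorem scheme_lp_max (D δ m : ℕ) (hδ : 1 ≤ δ) :
    ((3 ≤ D ∧ D ≤ 5) → (δ : ℤ) = ((D : ℤ) - 2) * m →
      IsGreatest
        {v : ℤ | ∃ x y : ℕ, ((D : ℤ) - 2) * x + (D : ℤ) * y = (δ : ℤ) ∧
          v = 2 * x + 3 * y - 1}
        (2 * (m : ℤ) - 1)) ∧
    (7 ≤ D → (δ : ℤ) = (D : ℤ) * m →
      IsGreatest
        {v : ℤ | ∃ x y : ℕ, ((D : ℤ) - 2) * x + (D : ℤ) * y = (δ : ℤ) ∧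
          v = 2 * x + 3 * y - 1}
        (3 * (m : ℤ) - 1)) :=
  scheme_lp_max_general D δ m
end
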